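/- For every z ∈ K and i, j ∈ {1,2} with i ≠ j, the quantity 𝔼_z[|f_i·S(τ)| e^{a(c_i)·S(τ)}; τ = τ_j < τ_i] is finite. -/

import Mathlib

open scoped ENNReal Classical

noncomputable section

namespace KilledRW

/-- The two-dimensional integer lattice. -/
abbrev Z2 := ℤ × ℤ

/-- The plane `ℝ²`. -/
abbrev R2 := ℝ × ℝ

/-- Euclidean dot product on `ℝ²`. -/
def dotR (a b : R2) : ℝ := a.1 * b.1 + a.2 * b.2

/-- Embedding of the lattice into the plane. -/
def emb (z : Z2) : R2 := ((z.1 : ℝ), (z.2 : ℝ))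

/-- Euclidean norm on `ℝ²`. -/
def nrm (x : R2) : ℝ := Real.sqrt (dotR x x)

/-- The jump generating function `φ(a) = Σ_z γ(z) e^{a·z}`. -/
def jgf (γ : Z2 → ℝ) (a : R2) : ℝ := ∑' z : Z2, γ z * Real.exp (dotR a (emb z))

/-- The gradient `∇φ(a) = Σ_z z γ(z) e^{a·z}` of the jump generating function. -/
def gradJgf (γ : Z2 → ℝ) (a : R2) : R2 :=
  (∑' z : Z2, γ z * Real.exp (dotR a (emb z)) * (z.1 : ℝ),
   ∑' z : Z2, γ z * Real.exp (dotR a (emb z)) * (z.2 : ℝ))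

/-- The normalized gradient `q(a) = ∇φ(a)/|∇φ(a)|`. -/
def qmap (γ : Z2 → ℝ) (a : R2) : R2 := (nrm (gradJgf γ a))⁻¹ • gradJgf γ a

/-- (Sub)stochastic transition kernel of the twisted random walk `S_a`:
`p_a(z,z') = γ(z'-z) e^{a·(z'-z)}`.  For `a = 0` this is the kernel of the original walk. -/
def twKer (γ : Z2 → ℝ) (a : R2) (z z' : Z2) : ℝ≥0∞ :=
  ENNReal.ofReal (γ (z' - z) * Real.exp (dotR a (emb (z' - z))))

/-- `n`-step transition probabilities of the (sub)stochastic kernel `κ`. -/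
def nstep (κ : Z2 → Z2 → ℝ≥0∞) : ℕ → Z2 → Z2 → ℝ≥0∞
  | 0, z, z' => if z' = z then 1 else 0
  | n + 1, z, z' => ∑' w : Z2, κ z w * nstep κ n w z'

/-- `exitP κ A n z z' = ℙ_z(τ_A = n, S(n) = z')`: the probability that the walk with kernel `κ`
started at `z` stays in `A` strictly before time `n` and is at `z' ∉ A` at time `n`
(where `τ_A = inf{n ≥ 0 : S(n) ∉ A}`). -/
def exitP (κ : Z2 → Z2 → ℝ≥0∞) (A : Set Z2) : ℕ → Z2 → Z2 → ℝ≥0∞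
  | 0, z, z' => if z' = z ∧ z ∉ A then 1 else 0
  | n + 1, z, z' => if z ∈ A then ∑' w : Z2, κ z w * exitP κ A n w z' else 0

/-- `aliveP κ A n z z' = ℙ_z(τ_A > n, S(n) = z')`. -/
def aliveP (κ : Z2 → Z2 → ℝ≥0∞) (A : Set Z2) : ℕ → Z2 → Z2 → ℝ≥0∞
  | 0, z, z' => if z' = z ∧ z ∈ A then 1 else 0
  | n + 1, z, z' => if z ∈ A then ∑' w : Z2, κ z w * aliveP κ A n w z' else 0

/-- `ℙ_z(τ_A < ∞)` for the walk with kernel `κ`. -/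
def exitTotal (κ : Z2 → Z2 → ℝ≥0∞) (A : Set Z2) (z : Z2) : ℝ≥0∞ :=
  ∑' n : ℕ, ∑' z' : Z2, exitP κ A n z z'

/-- `𝔼_z[g(S(τ_A)); τ_A < ∞]` for a nonnegative integrand, with values in `ℝ≥0∞`. -/
def exitLExp (κ : Z2 → Z2 → ℝ≥0∞) (A : Set Z2) (z : Z2) (g : Z2 → ℝ) : ℝ≥0∞ :=
  ∑' n : ℕ, ∑' z' : Z2, exitP κ A n z z' * ENNReal.ofReal (g z')

/-- `𝔼_z[g(S(τ_A)); τ_A < ∞]` for a signed integrand (positive part minus negative part). -/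
def exitExp (κ : Z2 → Z2 → ℝ≥0∞) (A : Set Z2) (z : Z2) (g : Z2 → ℝ) : ℝ :=
  (exitLExp κ A z g).toReal - (exitLExp κ A z fun w => -g w).toReal

/-- `𝔼_z[g(S(τ_A)); τ_A ≤ n]`, nonnegative version. -/
def exitLExpTrunc (κ : Z2 → Z2 → ℝ≥0∞) (A : Set Z2) (z : Z2) (g : Z2 → ℝ) (n : ℕ) : ℝ≥0∞ :=
  ∑ m ∈ Finset.range (n + 1), ∑' z' : Z2, exitP κ A m z z' * ENNReal.ofReal (g z')

/-- `𝔼_z[g(S(τ_A)); τ_A ≤ n]`, signed version. -/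
def exitExpTrunc (κ : Z2 → Z2 → ℝ≥0∞) (A : Set Z2) (z : Z2) (g : Z2 → ℝ) (n : ℕ) : ℝ :=
  (exitLExpTrunc κ A z g n).toReal - (exitLExpTrunc κ A z (fun w => -g w) n).toReal

/-- `𝔼_z[g(S(n)); τ_A > n]`, nonnegative version. -/
def aliveLExpAt (κ : Z2 → Z2 → ℝ≥0∞) (A : Set Z2) (z : Z2) (g : Z2 → ℝ) (n : ℕ) : ℝ≥0∞ :=
  ∑' z' : Z2, aliveP κ A n z z' * ENNReal.ofReal (g z')

/-- `𝔼_z[g(S(n)); τ_A > n]`, signed version. -/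
def aliveExpAt (κ : Z2 → Z2 → ℝ≥0∞) (A : Set Z2) (z : Z2) (g : Z2 → ℝ) (n : ℕ) : ℝ :=
  (aliveLExpAt κ A z g n).toReal - (aliveLExpAt κ A z (fun w => -g w) n).toReal

/-!
Since `∇φ(a)` points along `cᵢ` and `(fᵢ - fⱼ)·cᵢ = -fⱼ·cᵢ < 0`, the derivative of
`t ↦ φ(a + t(fᵢ - fⱼ))` at `0` is negative, so `b = a + t(fᵢ - fⱼ)` satisfies `φ(b) < 1` for
some `t > 0`. On `{fᵢ·x > 0 ≥ fⱼ·x}` we have `|fᵢ·x| e^{a·x} ≤ t⁻¹ e^{b·x}`, and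
`𝔼_z[e^{b·S(n)}; τ = n] ≤ φ(b)ⁿ e^{b·z}`, so the expectation is dominated by a convergent
geometric series.
-/

open Filter Topology

lemma dotR_add_left (a b x : R2) : dotR (a + b) x = dotR a x + dotR b x := by
  simp only [dotR, Prod.fst_add, Prod.snd_add]; ring

lemma dotR_sub_left (a b x : R2) : dotR (a - b) x = dotR a x - dotR b x := by
  simp only [dotR, Prod.fst_sub, Prod.snd_sub]; ring

lemma dotR_smul_left (t : ℝ) (a x : R2) : dotR (t • a) x = t * dotR a x := by
  simp only [dotR, Prod.smul_fst, Prod.smul_snd, smul_eq_mul]; ring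

lemma dotR_smul_right (t : ℝ) (a x : R2) : dotR a (t • x) = t * dotR a x := by
  simp only [dotR, Prod.smul_fst, Prod.smul_snd, smul_eq_mul]; ring

lemma dotR_emb_sub (a : R2) (w z : Z2) :
    dotR a (emb (w - z)) = dotR a (emb w) - dotR a (emb z) := by
  simp only [dotR, emb, Prod.fst_sub, Prod.snd_sub, Int.cast_sub]; ring

lemma nrm_nonneg (x : R2) : 0 ≤ nrm x := Real.sqrt_nonneg _

lemma exists_gt_lt_of_hasDerivAt_neg {f : ℝ → ℝ} {f' x : ℝ} (hf : HasDerivAt f f' x)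
    (hf' : f' < 0) : ∃ y, x < y ∧ f y < f x := by
  have hslope : ∀ᶠ y in 𝓝[>] x, slope f x y < 0 :=
    nhdsGT_le_nhdsNE x (hf.tendsto_slope.eventually (eventually_lt_nhds hf'))
  obtain ⟨y, hy, hxy⟩ := (hslope.and self_mem_nhdsWithin).exists
  refine ⟨y, hxy, ?_⟩
  rw [slope_def_field, div_neg_iff] at hy
  rcases hy with ⟨-, hyx⟩ | ⟨hdiff, -⟩ <;> linarith

lemma abs_mul_exp_mul_le (s : ℝ) {t : ℝ} (ht : |t| ≤ 1) :
    |s| * Real.exp (t * s) ≤ Real.exp (2 * s) + Real.exp (-(2 * s)) := by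
  have hts : t * s ≤ |s| := by
    calc t * s ≤ |t * s| := le_abs_self _
      _ = |t| * |s| := abs_mul t s
      _ ≤ |s| := mul_le_of_le_one_left (abs_nonneg s) ht
  calc |s| * Real.exp (t * s) ≤ Real.exp |s| * Real.exp |s| :=
        mul_le_mul (by linarith [Real.add_one_le_exp |s|]) (Real.exp_le_exp.mpr hts)
          (Real.exp_nonneg _) (Real.exp_nonneg _)
    _ = Real.exp (2 * |s|) := by rw [← Real.exp_add]; ring_nf
    _ ≤ Real.exp (2 * s) + Real.exp (-(2 * s)) := by
        rcases abs_cases s with ⟨hs, -⟩ | ⟨hs, -⟩ <;> rw [hs]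
        · linarith [Real.exp_pos (-(2 * s))]
        · rw [mul_neg]; linarith [Real.exp_pos (2 * s)]

section JumpGeneratingFunction

variable {γ : Z2 → ℝ} (hγ0 : ∀ z : Z2, 0 ≤ γ z)
  (hA3 : ∀ a : R2, Summable fun z : Z2 => γ z * Real.exp (dotR a (emb z)))
include hγ0

lemma abs_jgf_term_mul_dotR_le (a v : R2) (w : Z2) {t : ℝ} (ht : |t| ≤ 1) :
    |γ w * Real.exp (dotR (a + t • v) (emb w)) * dotR v (emb w)|
      ≤ γ w * Real.exp (dotR (a + (2 : ℝ) • v) (emb w))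
        + γ w * Real.exp (dotR (a - (2 : ℝ) • v) (emb w)) := by
  have he : 0 ≤ γ w * Real.exp (dotR a (emb w)) := mul_nonneg (hγ0 w) (Real.exp_nonneg _)
  calc |γ w * Real.exp (dotR (a + t • v) (emb w)) * dotR v (emb w)|
      = γ w * Real.exp (dotR a (emb w))
          * (|dotR v (emb w)| * Real.exp (t * dotR v (emb w))) := by
        rw [dotR_add_left, dotR_smul_left, Real.exp_add, abs_mul, abs_mul, abs_mul,
          abs_of_nonneg (hγ0 w), abs_of_pos (Real.exp_pos _), abs_of_pos (Real.exp_pos _)]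
        ring
    _ ≤ γ w * Real.exp (dotR a (emb w))
          * (Real.exp (2 * dotR v (emb w)) + Real.exp (-(2 * dotR v (emb w)))) :=
        mul_le_mul_of_nonneg_left (abs_mul_exp_mul_le _ ht) he
    _ = _ := by
        rw [dotR_add_left, dotR_sub_left, dotR_smul_left, sub_eq_add_neg, Real.exp_add,
          Real.exp_add]
        ring

include hA3

lemma summable_jgf_term_mul_dotR (a v : R2) :
    Summable fun w : Z2 => γ w * Real.exp (dotR a (emb w)) * dotR v (emb w) := by
  refine .of_norm_bounded ((hA3 (a + (2 : ℝ) • v)).add (hA3 (a - (2 : ℝ) • v))) fun w => ?_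
  simpa using abs_jgf_term_mul_dotR_le hγ0 a v w (t := 0) (by simp)

lemma tsum_jgf_term_mul_dotR (a v : R2) :
    ∑' w : Z2, γ w * Real.exp (dotR a (emb w)) * dotR v (emb w) = dotR v (gradJgf γ a) := by
  have h₁ : Summable fun w : Z2 => γ w * Real.exp (dotR a (emb w)) * (w.1 : ℝ) :=
    (summable_jgf_term_mul_dotR hγ0 hA3 a (1, 0)).congr fun w => by simp [dotR, emb]
  have h₂ : Summable fun w : Z2 => γ w * Real.exp (dotR a (emb w)) * (w.2 : ℝ) :=
    (summable_jgf_term_mul_dotR hγ0 hA3 a (0, 1)).congr fun w => by simp [dotR, emb]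
  calc ∑' w : Z2, γ w * Real.exp (dotR a (emb w)) * dotR v (emb w)
      = ∑' w : Z2, (v.1 * (γ w * Real.exp (dotR a (emb w)) * (w.1 : ℝ))
          + v.2 * (γ w * Real.exp (dotR a (emb w)) * (w.2 : ℝ))) :=
        tsum_congr fun w => by
          rw [show dotR v (emb w) = v.1 * w.1 + v.2 * w.2 from rfl]; ring
    _ = dotR v (gradJgf γ a) := by
        rw [(h₁.mul_left _).tsum_add (h₂.mul_left _), tsum_mul_left, tsum_mul_left]; rfl

lemma hasDerivAt_jgf_line (a v : R2) :
    HasDerivAt (fun t : ℝ => jgf γ (a + t • v)) (dotR v (gradJgf γ a)) 0 := by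
  have hderiv (w : Z2) (t : ℝ) :
      HasDerivAt (fun s : ℝ => γ w * Real.exp (dotR (a + s • v) (emb w)))
        (γ w * Real.exp (dotR (a + t • v) (emb w)) * dotR v (emb w)) t := by
    simp only [dotR_add_left, dotR_smul_left]
    have := ((hasDerivAt_mul_const (x := t) (dotR v (emb w))).const_add (dotR a (emb w))).exp
    simpa [mul_assoc] using this.const_mul (γ w)
  have hball : (0 : ℝ) ∈ Metric.ball (0 : ℝ) 1 := Metric.mem_ball_self one_pos
  have key := hasDerivAt_tsum_of_isPreconnected
    ((hA3 (a + (2 : ℝ) • v)).add (hA3 (a - (2 : ℝ) • v))) Metric.isOpen_ball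
    (convex_ball (0 : ℝ) 1).isPreconnected (fun w t _ => hderiv w t)
    (fun w t ht => abs_jgf_term_mul_dotR_le hγ0 a v w
      (by simpa [Real.dist_eq] using (Metric.mem_ball.mp ht).le))
    hball (by simpa using hA3 a) hball
  rw [← tsum_jgf_term_mul_dotR hγ0 hA3 a v]
  simp only [zero_smul, add_zero] at key
  exact key

lemma exists_pos_jgf_lt_one {a v : R2} (haD : jgf γ a = 1)
    (hv : dotR v (gradJgf γ a) < 0) : ∃ t : ℝ, 0 < t ∧ jgf γ (a + t • v) < 1 := by
  obtain ⟨t, ht, hlt⟩ := exists_gt_lt_of_hasDerivAt_neg (hasDerivAt_jgf_line hγ0 hA3 a v) hv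
  exact ⟨t, ht, by simpa [haD] using hlt⟩

end JumpGeneratingFunction

lemma dotR_gradJgf_neg_of_qmap_eq {γ : Z2 → ℝ} {a c v : R2} (hq : qmap γ a = c)
    (hvc : dotR v c < 0) : dotR v (gradJgf γ a) < 0 := by
  rw [← hq, qmap, dotR_smul_right] at hvc
  by_contra! h
  exact hvc.not_ge (mul_nonneg (inv_nonneg.mpr (nrm_nonneg _)) h)

section ExitExpectation

variable {κ : Z2 → Z2 → ℝ≥0∞} {A : Set Z2}

lemma tsum_exitP_mul_le_pow {h : Z2 → ℝ≥0∞} {ρ : ℝ≥0∞}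
    (hh : ∀ z, ∑' w, κ z w * h w ≤ ρ * h z) (n : ℕ) (z : Z2) :
    ∑' z', exitP κ A n z z' * h z' ≤ ρ ^ n * h z := by
  induction n generalizing z with
  | zero =>
    calc ∑' z', exitP κ A 0 z z' * h z' ≤ ∑' z', if z' = z then h z else 0 :=
          ENNReal.tsum_le_tsum fun z' => by
            unfold exitP; split_ifs <;> simp_all
      _ = ρ ^ 0 * h z := by rw [tsum_ite_eq, pow_zero, one_mul]
  | succ n ih =>
    by_cases hz : z ∈ A
    · calc ∑' z', exitP κ A (n + 1) z z' * h z'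
          = ∑' w, κ z w * ∑' z', exitP κ A n w z' * h z' := by
            simp only [exitP, if_pos hz, ← ENNReal.tsum_mul_right, ← ENNReal.tsum_mul_left,
              mul_assoc]
            exact ENNReal.tsum_comm
        _ ≤ ∑' w, κ z w * (ρ ^ n * h w) :=
            ENNReal.tsum_le_tsum fun w => mul_le_mul_right (ih w) _
        _ = ρ ^ n * ∑' w, κ z w * h w := by
            rw [← ENNReal.tsum_mul_left]; exact tsum_congr fun w => by ring
        _ ≤ ρ ^ (n + 1) * h z := by
            rw [pow_succ, mul_assoc]; exact mul_le_mul_right (hh z) _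
    · simp [exitP, hz]

lemma exitLExp_le_of_tsum_le {g : Z2 → ℝ} {ρ : ℝ≥0∞}
    (hg : ∀ z, ∑' w, κ z w * ENNReal.ofReal (g w) ≤ ρ * ENNReal.ofReal (g z)) (z : Z2) :
    exitLExp κ A z g ≤ (1 - ρ)⁻¹ * ENNReal.ofReal (g z) :=
  calc exitLExp κ A z g ≤ ∑' n : ℕ, ρ ^ n * ENNReal.ofReal (g z) :=
        ENNReal.tsum_le_tsum fun n => tsum_exitP_mul_le_pow hg n z
    _ = (1 - ρ)⁻¹ * ENNReal.ofReal (g z) := by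
        rw [ENNReal.tsum_mul_right, ENNReal.tsum_geometric]

lemma exitLExp_le_mul_of_le {g h : Z2 → ℝ} {C : ℝ} (hC : 0 ≤ C)
    (hgh : ∀ w, g w ≤ C * h w) (z : Z2) :
    exitLExp κ A z g ≤ ENNReal.ofReal C * exitLExp κ A z h := by
  simp only [exitLExp, ← ENNReal.tsum_mul_left]
  refine ENNReal.tsum_le_tsum fun n => ENNReal.tsum_le_tsum fun z' => ?_
  calc exitP κ A n z z' * ENNReal.ofReal (g z')
      ≤ exitP κ A n z z' * (ENNReal.ofReal C * ENNReal.ofReal (h z')) := by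
        rw [← ENNReal.ofReal_mul hC]
        exact mul_le_mul_right (ENNReal.ofReal_le_ofReal (hgh z')) _
    _ = ENNReal.ofReal C * (exitP κ A n z z' * ENNReal.ofReal (h z')) := by ring

end ExitExpectation

lemma tsum_twKer_mul_exp {γ : Z2 → ℝ} (hγ0 : ∀ z : Z2, 0 ≤ γ z) {b : R2}
    (hb : Summable fun z : Z2 => γ z * Real.exp (dotR b (emb z))) (z : Z2) :
    ∑' w, twKer γ 0 z w * ENNReal.ofReal (Real.exp (dotR b (emb w)))
      = ENNReal.ofReal (jgf γ b) * ENNReal.ofReal (Real.exp (dotR b (emb z))) := by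
  have hterm (w : Z2) : twKer γ 0 z w * ENNReal.ofReal (Real.exp (dotR b (emb w)))
      = ENNReal.ofReal (γ (w - z) * Real.exp (dotR b (emb (w - z))))
          * ENNReal.ofReal (Real.exp (dotR b (emb z))) := by
    have hzero : dotR 0 (emb (w - z)) = 0 := by simp [dotR]
    rw [twKer, hzero, Real.exp_zero, mul_one, ← ENNReal.ofReal_mul (hγ0 _),
      ← ENNReal.ofReal_mul (mul_nonneg (hγ0 _) (Real.exp_nonneg _)), dotR_emb_sub,
      mul_assoc, ← Real.exp_add, sub_add_cancel]
  have hshift : ∑' w, ENNReal.ofReal (γ (w - z) * Real.exp (dotR b (emb (w - z))))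
      = ∑' u, ENNReal.ofReal (γ u * Real.exp (dotR b (emb u))) :=
    (Equiv.subRight z).tsum_eq fun u => ENNReal.ofReal (γ u * Real.exp (dotR b (emb u)))
  rw [tsum_congr hterm, ENNReal.tsum_mul_right, hshift,
    ← ENNReal.ofReal_tsum_of_nonneg (fun u => mul_nonneg (hγ0 u) (Real.exp_nonneg _)) hb]
  rfl

lemma side_weight_le_exp (f₁ f₂ a x : R2) {t : ℝ} (ht : 0 < t) :
    (if 0 < dotR f₁ x ∧ dotR f₂ x ≤ 0 then |dotR f₁ x| * Real.exp (dotR a x) else 0)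
      ≤ t⁻¹ * Real.exp (dotR (a + t • (f₁ - f₂)) x) := by
  split_ifs with hside
  · obtain ⟨h₁, h₂⟩ := hside
    have hlin : t * dotR f₁ x ≤ Real.exp (t * dotR f₁ x) := by
      linarith [Real.add_one_le_exp (t * dotR f₁ x)]
    have hexp : Real.exp (dotR (a + t • (f₁ - f₂)) x)
        = Real.exp (t * dotR f₁ x) * Real.exp (dotR a x) * Real.exp (-(t * dotR f₂ x)) := by
      rw [← Real.exp_add, ← Real.exp_add, dotR_add_left, dotR_smul_left, dotR_sub_left]; ring_nf
    have hone : 1 ≤ Real.exp (-(t * dotR f₂ x)) := Real.one_le_exp (by nlinarith)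
    rw [abs_of_pos h₁, hexp, le_inv_mul_iff₀ ht, ← mul_assoc]
    calc t * dotR f₁ x * Real.exp (dotR a x)
        ≤ Real.exp (t * dotR f₁ x) * Real.exp (dotR a x) :=
          mul_le_mul_of_nonneg_right hlin (Real.exp_nonneg _)
      _ ≤ _ := le_mul_of_one_le_right (by positivity) hone
  · positivity

theorem exit_exp_abs_side_finite_general
    (γ : Z2 → ℝ) (c f : Fin 2 → R2) (K : Set R2)
    -- `γ` is a probability distribution on `ℤ²`
    (hγ0 : ∀ z : Z2, 0 ≤ γ z)
    -- `c 0, c 1` are unit vectors, `f i` is the unit vector perpendicular to `c i`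
    -- pointing into the cone; the angle between `c 0` and `c 1` lies in `(0, π)`
    (hperp : ∀ i, dotR (f i) (c i) = 0)
    (hinward : ∀ i j, i ≠ j → 0 < dotR (f i) (c j))
    -- (A3) the jump generating function is finite everywhere
    (hA3 : ∀ a : R2, Summable fun z : Z2 => γ z * Real.exp (dotR a (emb z)))
    (z : Z2) (i j : Fin 2) (hij : i ≠ j)
    -- `a = a(cᵢ)`
    (a : R2) (haD : jgf γ a = 1) (haq : qmap γ a = c i) :
    exitLExp (twKer γ 0) (emb ⁻¹' K) z
        (fun z' => if 0 < dotR (f i) (emb z') ∧ dotR (f j) (emb z') ≤ 0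
          then |dotR (f i) (emb z')| * Real.exp (dotR a (emb z')) else 0)
      ≠ ⊤ := by
  have hdescent : dotR (f i - f j) (gradJgf γ a) < 0 := by
    refine dotR_gradJgf_neg_of_qmap_eq haq ?_
    rw [dotR_sub_left, hperp i]
    linarith [hinward j i hij.symm]
  obtain ⟨t, ht, hb⟩ := exists_pos_jgf_lt_one hγ0 hA3 haD hdescent
  have hexit := exitLExp_le_of_tsum_le (A := emb ⁻¹' K)
    (fun w => (tsum_twKer_mul_exp hγ0 (hA3 (a + t • (f i - f j))) w).le) z
  refine ne_top_of_le_ne_top ?_ (exitLExp_le_mul_of_le (inv_nonneg.mpr ht.le)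
    (fun w => side_weight_le_exp (f i) (f j) a (emb w) ht) z)
  refine ENNReal.mul_ne_top ENNReal.ofReal_ne_top (ne_top_of_le_ne_top ?_ hexit)
  refine ENNReal.mul_ne_top (ENNReal.inv_ne_top.mpr ?_) ENNReal.ofReal_ne_top
  exact (tsub_pos_of_lt (ENNReal.ofReal_lt_one.mpr hb)).ne'

/-- **Corollary 1.** For every `z ∈ K` and `i ≠ j` in `{1,2}`, the quantity
`𝔼_z[|fᵢ·S(τ)| e^{a(cᵢ)·S(τ)}; τ = τⱼ < τᵢ]` is finite.  Here `a(cᵢ)` is the unique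
point `a ∈ ∂D` with `q(a) = cᵢ`, and the event `{τ = τⱼ < τᵢ}` means `S(τ) ∈ Hᵢ \ Hⱼ`. -/
theorem exit_exp_abs_side_finite
    (γ : Z2 → ℝ) (c f : Fin 2 → R2) (K : Set R2)
    -- `γ` is a probability distribution on `ℤ²`
    (hγ0 : ∀ z : Z2, 0 ≤ γ z) (hγ1 : HasSum γ 1)
    -- `c 0, c 1` are unit vectors, `f i` is the unit vector perpendicular to `c i`
    -- pointing into the cone; the angle between `c 0` and `c 1` lies in `(0, π)`
    (hcUnit : ∀ i, nrm (c i) = 1) (hfUnit : ∀ i, nrm (f i) = 1)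
    (hperp : ∀ i, dotR (f i) (c i) = 0)
    (hinward : ∀ i j, i ≠ j → 0 < dotR (f i) (c j))
    -- `K` is the open convex cone bounded by the rays through `c 0` and `c 1`
    (hK : K = {x : R2 | ∀ i, 0 < dotR (f i) x})
    -- (A1) the walk is irreducible with nonzero mean
    (hA1 : ∀ z z' : Z2, ∃ n : ℕ, 0 < nstep (twKer γ 0) n z z')
    (hmean : (∑' z : Z2, γ z * (z.1 : ℝ), ∑' z : Z2, γ z * (z.2 : ℝ)) ≠ (0, 0))
    -- (A2) the walk killed when leaving `K` is irreducible in `K`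
    (hA2 : ∀ z z' : Z2, emb z ∈ K → emb z' ∈ K →
        ∃ n : ℕ, 0 < aliveP (twKer γ 0) (emb ⁻¹' K) n z z')
    -- (A3) the jump generating function is finite everywhere
    (hA3 : ∀ a : R2, Summable fun z : Z2 => γ z * Real.exp (dotR a (emb z)))
    -- (A4) the projections `fᵢ·S(n)` are aperiodic random walks
    (hA4 : ∀ i : Fin 2, ∀ d : ℕ,
        (∀ n : ℕ, 0 < n →
          0 < ∑' z : Z2, (if dotR (f i) (emb z) = 0 then nstep (twKer γ 0) n 0 z else 0) →
          d ∣ n) → d = 1)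
    (z : Z2) (hz : emb z ∈ K) (i j : Fin 2) (hij : i ≠ j)
    -- `a = a(cᵢ)`
    (a : R2) (haD : jgf γ a = 1) (haq : qmap γ a = c i) :
    exitLExp (twKer γ 0) (emb ⁻¹' K) z
        (fun z' => if 0 < dotR (f i) (emb z') ∧ dotR (f j) (emb z') ≤ 0
          then |dotR (f i) (emb z')| * Real.exp (dotR a (emb z')) else 0)
      ≠ ⊤ :=
  exit_exp_abs_side_finite_general γ c f K hγ0 hperp hinward hA3 z i j hij a haD haq

end KilledRW
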